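/- Let Ω ⊆ ℝ² be open with (0,0) ∈ Ω and let f : ℝ² → ℝ be of class C³ on Ω. Then there exist constants C > 0 and h₀ > 0 such that for every 0 < h ≤ h₀ the triangle S lies in Ω and, with p(x,y) the quadratic interpolant built from the data f_Q = f(Q) for Q ∈ {A,B,C,D,E,F}, one has |f(x,y) − p(x,y)| ≤ C·h³ for all (x,y) in S_R. -/

import Mathlib

set_option linter.unusedVariables false

/-- √3 -/
noncomputable def s3 : ℝ := Real.sqrt 3

/-- Vertices of the equilateral triangle of side `2h` and the midpoints of its sides. -/
noncomputable def ptA (h : ℝ) : ℝ × ℝ := (-h, s3 / 2 * h)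
noncomputable def ptB (h : ℝ) : ℝ × ℝ := (-h / 2, 0)
noncomputable def ptC (h : ℝ) : ℝ × ℝ := (0, -(s3 / 2 * h))
noncomputable def ptD (h : ℝ) : ℝ × ℝ := (h / 2, 0)
noncomputable def ptE (h : ℝ) : ℝ × ℝ := (h, s3 / 2 * h)
noncomputable def ptF (h : ℝ) : ℝ × ℝ := (0, s3 / 2 * h)

/-- Coefficients of the quadratic interpolant. -/
noncomputable def a00 (h fA fB fC fD fE fF : ℝ) : ℝ := 4 / 9 * (fB + fD + fF) - 1 / 9 * (fA + fC + fE)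
noncomputable def a10 (h fA fB fC fD fE fF : ℝ) : ℝ := (-fA - 4 * fB + 4 * fD + fE) / (6 * h)
noncomputable def a01 (h fA fB fC fD fE fF : ℝ) : ℝ := s3 / (18 * h) * (fA - 4 * fB - 2 * fC - 4 * fD + fE + 8 * fF)
noncomputable def a20 (h fA fB fC fD fE fF : ℝ) : ℝ := (fA - 2 * fF + fE) / (2 * h ^ 2)
noncomputable def a11 (h fA fB fC fD fE fF : ℝ) : ℝ := -(s3 / (3 * h ^ 2)) * (fA - 2 * fB + 2 * fD - fE)
noncomputable def a02 (h fA fB fC fD fE fF : ℝ) : ℝ := (fA - 4 * fB + 4 * fC - 4 * fD + fE + 2 * fF) / (6 * h ^ 2)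

/-- The quadratic interpolant `p(x,y)`. -/
noncomputable def interp (h fA fB fC fD fE fF x y : ℝ) : ℝ :=
  a00 h fA fB fC fD fE fF + a10 h fA fB fC fD fE fF * x
    + a01 h fA fB fC fD fE fF * (y - s3 / 6 * h)
    + a20 h fA fB fC fD fE fF * x ^ 2
    + a11 h fA fB fC fD fE fF * x * (y - s3 / 6 * h)
    + a02 h fA fB fC fD fE fF * (y - s3 / 6 * h) ^ 2

/-- The closed equilateral triangle `S` with vertices `A, C, E`. -/
noncomputable def triS (h : ℝ) : Set (ℝ × ℝ) := convexHull ℝ {ptA h, ptC h, ptE h}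
/-- The closed triangle `S_R` with vertices `B, D, F`. -/
noncomputable def triSR (h : ℝ) : Set (ℝ × ℝ) := convexHull ℝ {ptB h, ptD h, ptF h}

/-!
The interpolant `p` reproduces every quadratic polynomial and depends linearly on the data.
In the scaled variables `x / h` and `(y - √3 h / 6) / h` its coefficients are fixed combinations
of the data, so on the ball of radius `h` it is bounded by `30` times the largest datum.
Applying this to `f - T`, with `T` the second-order Taylor polynomial of `f` at the origin,
whose remainder is `O(h³)` on that ball because `D²f` is Lipschitz near `0`, bounds the error by
`31` times that remainder.
-/

open Set Metric
open scoped NNReal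

section Taylor

variable {E F : Type*} [NormedAddCommGroup E] [NormedSpace ℝ E]
  [NormedAddCommGroup F] [NormedSpace ℝ F]

theorem norm_le_of_hasDerivAt_of_norm_deriv_le_pow {φ φ' : ℝ → F} {K : ℝ} (n : ℕ)
    (hφ₀ : φ 0 = 0) (hφ : ∀ t ∈ Icc (0 : ℝ) 1, HasDerivAt φ (φ' t) t)
    (hφ' : ∀ t ∈ Ico (0 : ℝ) 1, ‖φ' t‖ ≤ K * t ^ n) :
    ‖φ 1‖ ≤ K / (n + 1) := by
  have hB : ∀ t, HasDerivAt (fun t => K / (n + 1) * t ^ (n + 1)) (K * t ^ n) t := fun t =>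
    ((hasDerivAt_pow (n + 1) t).const_mul (K / (n + 1))).congr_deriv (by push_cast; field_simp)
  simpa using image_norm_le_of_norm_deriv_right_le_deriv_boundary
    (fun t ht => (hφ t ht).continuousAt.continuousWithinAt)
    (fun t ht => (hφ t (Ico_subset_Icc_self ht)).hasDerivWithinAt) (by simp [hφ₀]) hB hφ'
    (right_mem_Icc.2 zero_le_one)

variable {s : Set E} {a x : E}

theorem Convex.hasDerivAt_comp_add_smul_sub {g : E → F} {g' : E → E →L[ℝ] F} (hs : Convex ℝ s)
    (hg : ∀ y ∈ s, HasFDerivAt g (g' y) y) (ha : a ∈ s) (hx : x ∈ s) {t : ℝ}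
    (ht : t ∈ Icc (0 : ℝ) 1) :
    HasDerivAt (fun t : ℝ => g (a + t • (x - a))) (g' (a + t • (x - a)) (x - a)) t := by
  have hpath : HasDerivAt (fun t : ℝ => a + t • (x - a)) (x - a) t := by
    simpa using ((hasDerivAt_id t).smul_const (x - a)).const_add a
  exact (hg _ (hs.add_smul_sub_mem ha hx ht)).comp_hasDerivAt t hpath

theorem Convex.norm_taylor_one_le {g : E → F} {g' : E → E →L[ℝ] F} {C : ℝ}
    (hs : Convex ℝ s)
    (hg : ∀ y ∈ s, HasFDerivAt g (g' y) y) (hC : ∀ y ∈ s, ‖g' y - g' a‖ ≤ C * ‖y - a‖)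
    (ha : a ∈ s) (hx : x ∈ s) :
    ‖g x - g a - g' a (x - a)‖ ≤ C / 2 * ‖x - a‖ ^ 2 := by
  have key := norm_le_of_hasDerivAt_of_norm_deriv_le_pow 1
    (φ := fun t : ℝ => g (a + t • (x - a)) - g a - t • g' a (x - a))
    (φ' := fun t => (g' (a + t • (x - a)) - g' a) (x - a)) (K := C * ‖x - a‖ ^ 2)
    (by simp) (fun t ht => ?_) (fun t ht => ?_)
  · convert key using 1
    · simp
    · ring
  · exact (((hs.hasDerivAt_comp_add_smul_sub hg ha hx ht).sub_const (g a)).sub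
      ((hasDerivAt_id t).smul_const (g' a (x - a)))).congr_deriv (by simp)
  · calc ‖(g' (a + t • (x - a)) - g' a) (x - a)‖
        ≤ ‖g' (a + t • (x - a)) - g' a‖ * ‖x - a‖ := ContinuousLinearMap.le_opNorm _ _
      _ ≤ C * ‖t • (x - a)‖ * ‖x - a‖ := by
        gcongr
        simpa using hC _ (hs.add_smul_sub_mem ha hx (Ico_subset_Icc_self ht))
      _ = C * ‖x - a‖ ^ 2 * t ^ 1 := by
        rw [norm_smul, Real.norm_of_nonneg ht.1]; ring

theorem Convex.norm_taylor_two_le_of_fderiv {f : E → F} {f' : E → E →L[ℝ] F}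
    {B : E →L[ℝ] E →L[ℝ] F} {K : ℝ} (hs : Convex ℝ s) (hf : ∀ y ∈ s, HasFDerivAt f (f' y) y)
    (hK : ∀ y ∈ s, ‖f' y - f' a - B (y - a)‖ ≤ K * ‖y - a‖ ^ 2) (ha : a ∈ s) (hx : x ∈ s) :
    ‖f x - f a - f' a (x - a) - (1 / 2 : ℝ) • B (x - a) (x - a)‖ ≤ K / 3 * ‖x - a‖ ^ 3 := by
  have key := norm_le_of_hasDerivAt_of_norm_deriv_le_pow 2
    (φ := fun t : ℝ => f (a + t • (x - a)) - f a - t • f' a (x - a)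
      - (t ^ 2 / 2) • B (x - a) (x - a))
    (φ' := fun t => (f' (a + t • (x - a)) - f' a - B (t • (x - a))) (x - a))
    (K := K * ‖x - a‖ ^ 3) (by simp) (fun t ht => ?_) (fun t ht => ?_)
  · convert key using 1
    · simp
    · ring
  · have hquad : HasDerivAt (fun t : ℝ => (t ^ 2 / 2) • B (x - a) (x - a))
        (t • B (x - a) (x - a)) t :=
      (((hasDerivAt_pow 2 t).div_const 2).smul_const (B (x - a) (x - a))).congr_deriv
        (by congr 1; ring)
    exact ((((hs.hasDerivAt_comp_add_smul_sub hf ha hx ht).sub_const (f a)).sub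
      ((hasDerivAt_id t).smul_const (f' a (x - a)))).sub hquad).congr_deriv (by simp)
  · have hy := hs.add_smul_sub_mem ha hx (Ico_subset_Icc_self ht)
    calc ‖(f' (a + t • (x - a)) - f' a - B (t • (x - a))) (x - a)‖
        ≤ ‖f' (a + t • (x - a)) - f' a - B (t • (x - a))‖ * ‖x - a‖ :=
          ContinuousLinearMap.le_opNorm _ _
      _ ≤ K * ‖t • (x - a)‖ ^ 2 * ‖x - a‖ := by
        gcongr
        simpa using hK _ hy
      _ = K * ‖x - a‖ ^ 3 * t ^ 2 := by
        rw [norm_smul, Real.norm_of_nonneg ht.1]; ring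

theorem Convex.norm_taylor_two_le {f : E → F} {f' : E → E →L[ℝ] F}
    {f'' : E → E →L[ℝ] E →L[ℝ] F} {M : ℝ≥0} (hs : Convex ℝ s)
    (hf : ∀ y ∈ s, HasFDerivAt f (f' y) y) (hf' : ∀ y ∈ s, HasFDerivAt f' (f'' y) y)
    (hf'' : LipschitzOnWith M f'' s) (ha : a ∈ s) (hx : x ∈ s) :
    ‖f x - f a - f' a (x - a) - (1 / 2 : ℝ) • f'' a (x - a) (x - a)‖ ≤ M / 6 * ‖x - a‖ ^ 3 := by
  have hf'_taylor : ∀ y ∈ s, ‖f' y - f' a - f'' a (y - a)‖ ≤ M / 2 * ‖y - a‖ ^ 2 := fun y hy =>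
    hs.norm_taylor_one_le hf' (fun z hz => hf''.norm_sub_le hz ha) ha hy
  convert hs.norm_taylor_two_le_of_fderiv hf hf'_taylor ha hx using 2
  ring

theorem ContDiffOn.exists_norm_taylor_two_le {Ω : Set E} {f : E → F} (hΩ : IsOpen Ω)
    (hf : ContDiffOn ℝ 3 f Ω) (hs : Convex ℝ s) (hs' : IsCompact s) (hsΩ : s ⊆ Ω) :
    ∃ M : ℝ≥0, ∀ a ∈ s, ∀ x ∈ s, ‖f x - f a - fderiv ℝ f a (x - a)
      - (1 / 2 : ℝ) • fderiv ℝ (fderiv ℝ f) a (x - a) (x - a)‖ ≤ M / 6 * ‖x - a‖ ^ 3 := by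
  have hf' : ContDiffOn ℝ 2 (fderiv ℝ f) Ω := hf.fderiv_of_isOpen hΩ (by norm_num)
  have hf'' : ContDiffOn ℝ 1 (fderiv ℝ (fderiv ℝ f)) Ω := hf'.fderiv_of_isOpen hΩ (by norm_num)
  obtain ⟨M, hM⟩ := (hf''.mono hsΩ).exists_lipschitzOnWith one_ne_zero hs hs'
  refine ⟨M, fun a ha x hx => hs.norm_taylor_two_le (fun y hy => ?_) (fun y hy => ?_) hM ha hx⟩
  · exact ((hf.contDiffAt (hΩ.mem_nhds (hsΩ hy))).differentiableAt (by norm_num)).hasFDerivAt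
  · exact ((hf'.contDiffAt (hΩ.mem_nhds (hsΩ hy))).differentiableAt (by norm_num)).hasFDerivAt

end Taylor

theorem sq_s3 : s3 ^ 2 = 3 := Real.sq_sqrt (by norm_num)

theorem s3_nonneg : 0 ≤ s3 := Real.sqrt_nonneg 3

theorem s3_le_two : s3 ≤ 2 := by nlinarith [sq_s3, s3_nonneg]

theorem interp_sub (h fA fB fC fD fE fF gA gB gC gD gE gF x y : ℝ) :
    interp h (fA - gA) (fB - gB) (fC - gC) (fD - gD) (fE - gE) (fF - gF) x y
      = interp h fA fB fC fD fE fF x y - interp h gA gB gC gD gE gF x y := by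
  unfold interp a00 a10 a01 a20 a11 a02
  ring

theorem ContinuousLinearMap.apply_prod_eq {G : Type*} [NormedAddCommGroup G] [NormedSpace ℝ G]
    (L : ℝ × ℝ →L[ℝ] G) (z : ℝ × ℝ) : L z = z.1 • L (1, 0) + z.2 • L (0, 1) := by
  conv_lhs => rw [show z = z.1 • ((1 : ℝ), (0 : ℝ)) + z.2 • ((0 : ℝ), (1 : ℝ)) by ext <;> simp]
  rw [map_add, map_smul, map_smul]

theorem interp_eq_of_quadratic (h x y c : ℝ) (L : ℝ × ℝ →L[ℝ] ℝ) (B : ℝ × ℝ →L[ℝ] ℝ × ℝ →L[ℝ] ℝ)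
    (hh : h ≠ 0) (P : ℝ × ℝ → ℝ) (hP : ∀ z, P z = c + L z + B z z) :
    interp h (P (ptA h)) (P (ptB h)) (P (ptC h)) (P (ptD h)) (P (ptE h)) (P (ptF h)) x y
      = P (x, y) := by
  have hP' : ∀ z : ℝ × ℝ, P z = c + z.1 * L (1, 0) + z.2 * L (0, 1)
      + z.1 * (z.1 * B (1, 0) (1, 0) + z.2 * B (0, 1) (1, 0))
      + z.2 * (z.1 * B (1, 0) (0, 1) + z.2 * B (0, 1) (0, 1)) := fun z => by
    rw [hP, L.apply_prod_eq, B.apply_prod_eq z, add_apply, smul_apply, smul_apply,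
      (B (1, 0)).apply_prod_eq z, (B (0, 1)).apply_prod_eq z]
    simp only [smul_eq_mul]
    ring
  simp only [hP', ptA, ptB, ptC, ptD, ptE, ptF]
  unfold interp a00 a10 a01 a20 a11 a02
  field_simp
  have hs3 : s3 ^ 3 = 3 * s3 := by rw [pow_succ, sq_s3]
  have hs4 : s3 ^ 4 = 9 := by rw [show 4 = 2 * 2 from rfl, pow_mul, sq_s3]; norm_num
  ring_nf
  rw [sq_s3, hs3, hs4]
  ring

theorem interp_eq_scaled (h fA fB fC fD fE fF x y : ℝ) (hh : h ≠ 0) :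
    interp h fA fB fC fD fE fF x y =
      a00 h fA fB fC fD fE fF + (-fA - 4 * fB + 4 * fD + fE) / 6 * (x / h)
        + s3 / 18 * (fA - 4 * fB - 2 * fC - 4 * fD + fE + 8 * fF) * ((y - s3 / 6 * h) / h)
        + (fA - 2 * fF + fE) / 2 * (x / h) ^ 2
        + -(s3 / 3) * (fA - 2 * fB + 2 * fD - fE) * ((x / h) * ((y - s3 / 6 * h) / h))
        + (fA - 4 * fB + 4 * fC - 4 * fD + fE + 2 * fF) / 6 * ((y - s3 / 6 * h) / h) ^ 2 := by
  unfold interp a10 a01 a20 a11 a02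
  field_simp

theorem abs_mul_le_of_abs_le {a b A B : ℝ} (ha : |a| ≤ A) (hb : |b| ≤ B) : |a * b| ≤ A * B :=
  abs_mul a b ▸ mul_le_mul ha hb (abs_nonneg b) ((abs_nonneg a).trans ha)

theorem abs_interp_le {h K x y eA eB eC eD eE eF : ℝ} (hh : 0 < h)
    (hA : |eA| ≤ K) (hB : |eB| ≤ K) (hC : |eC| ≤ K) (hD : |eD| ≤ K) (hE : |eE| ≤ K)
    (hF : |eF| ≤ K) (hx : |x| ≤ h) (hy : |y| ≤ h) :
    |interp h eA eB eC eD eE eF x y| ≤ 30 * K := by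
  have hK : 0 ≤ K := (abs_nonneg _).trans hA
  have hu : |x / h| ≤ 1 := by rw [abs_div, abs_of_pos hh, div_le_one hh]; exact hx
  have hv : |(y - s3 / 6 * h) / h| ≤ 2 := by
    rw [abs_div, abs_of_pos hh, div_le_iff₀ hh, abs_le]
    have := abs_le.mp hy
    constructor <;> nlinarith [s3_nonneg, s3_le_two]
  have hs3 : |s3| ≤ 2 := abs_le.mpr ⟨by linarith [s3_nonneg], s3_le_two⟩
  obtain ⟨hA, hA'⟩ := abs_le.mp hA
  obtain ⟨hB, hB'⟩ := abs_le.mp hB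
  obtain ⟨hC, hC'⟩ := abs_le.mp hC
  obtain ⟨hD, hD'⟩ := abs_le.mp hD
  obtain ⟨hE, hE'⟩ := abs_le.mp hE
  obtain ⟨hF, hF'⟩ := abs_le.mp hF
  have t0 : |a00 h eA eB eC eD eE eF| ≤ 2 * K := by
    unfold a00; exact abs_le.mpr ⟨by linarith, by linarith⟩
  have t1 : |(-eA - 4 * eB + 4 * eD + eE) / 6 * (x / h)| ≤ 10 / 6 * K * 1 :=
    abs_mul_le_of_abs_le (abs_le.mpr ⟨by linarith, by linarith⟩) hu
  have t2 : |s3 / 18 * (eA - 4 * eB - 2 * eC - 4 * eD + eE + 8 * eF) * ((y - s3 / 6 * h) / h)|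
      ≤ 2 / 18 * (20 * K) * 2 :=
    abs_mul_le_of_abs_le (abs_mul_le_of_abs_le (by rw [abs_div]; norm_num; linarith)
      (abs_le.mpr ⟨by linarith, by linarith⟩)) hv
  have t3 : |(eA - 2 * eF + eE) / 2 * (x / h) ^ 2| ≤ 2 * K * 1 ^ 2 :=
    abs_mul_le_of_abs_le (abs_le.mpr ⟨by linarith, by linarith⟩) (by rw [abs_pow]; gcongr)
  have t4 : |-(s3 / 3) * (eA - 2 * eB + 2 * eD - eE) * ((x / h) * ((y - s3 / 6 * h) / h))|
      ≤ 2 / 3 * (6 * K) * (1 * 2) :=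
    abs_mul_le_of_abs_le (abs_mul_le_of_abs_le (by rw [abs_neg, abs_div]; norm_num; linarith)
      (abs_le.mpr ⟨by linarith, by linarith⟩)) (abs_mul_le_of_abs_le hu hv)
  have t5 : |(eA - 4 * eB + 4 * eC - 4 * eD + eE + 2 * eF) / 6 * ((y - s3 / 6 * h) / h) ^ 2|
      ≤ 16 / 6 * K * 2 ^ 2 :=
    abs_mul_le_of_abs_le (abs_le.mpr ⟨by linarith, by linarith⟩) (by rw [abs_pow]; gcongr)
  rw [interp_eq_scaled _ _ _ _ _ _ _ _ _ hh.ne', abs_le]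
  rw [abs_le] at t0 t1 t2 t3 t4 t5
  constructor <;> linarith

theorem abs_s3_div_two_mul_le {h : ℝ} (hh : 0 ≤ h) : |s3 / 2 * h| ≤ h := by
  rw [abs_of_nonneg (by have := s3_nonneg; positivity)]
  nlinarith [s3_le_two]

theorem Prod.mem_closedBall_zero_of_abs_le {p : ℝ × ℝ} {r : ℝ} (h₁ : |p.1| ≤ r)
    (h₂ : |p.2| ≤ r) : p ∈ closedBall 0 r :=
  mem_closedBall_zero_iff.2 (norm_prod_le_iff.2 ⟨h₁, h₂⟩)

theorem triS_subset_closedBall {h : ℝ} (hh : 0 ≤ h) : triS h ⊆ closedBall 0 h := by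
  refine convexHull_min ?_ (convex_closedBall 0 h)
  simp only [Set.insert_subset_iff, Set.singleton_subset_iff, ptA, ptC, ptE]
  refine ⟨?_, ?_, ?_⟩ <;> apply Prod.mem_closedBall_zero_of_abs_le <;>
    simp only [abs_neg, abs_zero, abs_of_nonneg hh, abs_s3_div_two_mul_le hh, hh, le_refl]

theorem triSR_subset_closedBall {h : ℝ} (hh : 0 ≤ h) : triSR h ⊆ closedBall 0 h := by
  refine convexHull_min ?_ (convex_closedBall 0 h)
  simp only [Set.insert_subset_iff, Set.singleton_subset_iff, ptB, ptD, ptF]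
  refine ⟨?_, ?_, ?_⟩ <;> apply Prod.mem_closedBall_zero_of_abs_le <;>
    simp only [abs_div, abs_neg, abs_two, abs_zero, abs_of_nonneg hh, abs_s3_div_two_mul_le hh,
      hh] <;> linarith

theorem abs_sub_interp_le {h K c : ℝ} (hh : 0 < h) (g : ℝ × ℝ → ℝ) (L : ℝ × ℝ →L[ℝ] ℝ)
    (B : ℝ × ℝ →L[ℝ] ℝ × ℝ →L[ℝ] ℝ)
    (hg : ∀ w ∈ closedBall (0 : ℝ × ℝ) h, |g w - c - L w - B w w| ≤ K)
    {z : ℝ × ℝ} (hz : z ∈ closedBall 0 h) :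
    |g z - interp h (g (ptA h)) (g (ptB h)) (g (ptC h)) (g (ptD h)) (g (ptE h)) (g (ptF h))
      z.1 z.2| ≤ 31 * K := by
  set P : ℝ × ℝ → ℝ := fun w => c + L w + B w w
  replace hg : ∀ w ∈ closedBall (0 : ℝ × ℝ) h, |g w - P w| ≤ K := fun w hw => by
    simpa only [P, sub_add_eq_sub_sub] using hg w hw
  have hS : ∀ w ∈ ({ptA h, ptC h, ptE h} : Set (ℝ × ℝ)), |g w - P w| ≤ K := fun w hw =>
    hg w (triS_subset_closedBall hh.le (subset_convexHull ℝ _ hw))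
  have hSR : ∀ w ∈ ({ptB h, ptD h, ptF h} : Set (ℝ × ℝ)), |g w - P w| ≤ K := fun w hw =>
    hg w (triSR_subset_closedBall hh.le (subset_convexHull ℝ _ hw))
  obtain ⟨hz₁, hz₂⟩ := norm_prod_le_iff.1 (mem_closedBall_zero_iff.1 hz)
  have hinterp := abs_interp_le hh (hS (ptA h) (by simp)) (hSR (ptB h) (by simp))
    (hS (ptC h) (by simp)) (hSR (ptD h) (by simp)) (hS (ptE h) (by simp)) (hSR (ptF h) (by simp))
    hz₁ hz₂
  rw [interp_sub, interp_eq_of_quadratic h z.1 z.2 c L B hh.ne' P fun _ => rfl] at hinterp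
  calc _ = |(g z - P z) - (interp h (g (ptA h)) (g (ptB h)) (g (ptC h)) (g (ptD h)) (g (ptE h))
        (g (ptF h)) z.1 z.2 - P (z.1, z.2))| := by ring_nf
    _ ≤ |g z - P z| + |_| := abs_sub _ _
    _ ≤ K + 30 * K := add_le_add (hg z hz) hinterp
    _ = 31 * K := by ring

/-- Third order approximation of the linear reconstruction for `C³` functions. -/
theorem interp_third_order (Ω : Set (ℝ × ℝ)) (hΩ : IsOpen Ω) (hmem : (0, 0) ∈ Ω)
    (f : ℝ × ℝ → ℝ) (hf : ContDiffOn ℝ 3 f Ω) :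
    ∃ C > 0, ∃ h₀ > 0, ∀ h : ℝ, 0 < h → h ≤ h₀ →
      triS h ⊆ Ω ∧
      ∀ z ∈ triSR h,
        |f z - interp h (f (ptA h)) (f (ptB h)) (f (ptC h)) (f (ptD h)) (f (ptE h)) (f (ptF h))
            z.1 z.2| ≤ C * h ^ 3 := by
  obtain ⟨r, hr, hrΩ⟩ := nhds_basis_closedBall.mem_iff.1 (hΩ.mem_nhds hmem)
  obtain ⟨M, hM⟩ := hf.exists_norm_taylor_two_le hΩ (convex_closedBall 0 r)
    (isCompact_closedBall 0 r) hrΩ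
  refine ⟨31 * (M / 6) + 1, by positivity, r, hr, fun h hh hhr => ⟨?_, fun z hz => ?_⟩⟩
  · exact (triS_subset_closedBall hh.le).trans ((closedBall_subset_closedBall hhr).trans hrΩ)
  have htaylor : ∀ w ∈ closedBall (0 : ℝ × ℝ) h, |f w - f 0 - fderiv ℝ f 0 w
      - ((1 / 2 : ℝ) • fderiv ℝ (fderiv ℝ f) 0) w w| ≤ M / 6 * h ^ 3 := fun w hw => by
    have := hM 0 (mem_closedBall_self hr.le) w (closedBall_subset_closedBall hhr hw)
    rw [sub_zero, Real.norm_eq_abs, ← smul_apply, ← smul_apply] at this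
    exact this.trans (by gcongr; exact mem_closedBall_zero_iff.1 hw)
  calc _ ≤ 31 * (M / 6 * h ^ 3) :=
        abs_sub_interp_le hh f _ _ htaylor (triSR_subset_closedBall hh.le hz)
    _ ≤ (31 * (M / 6) + 1) * h ^ 3 := by nlinarith [pow_pos hh 3]
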